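/- Let Ω = (M, ⟨·,·⟩_M, D_M, A, L_A) be an (F,G,H)-metrized quantum vector bundle. For every r > 0, the modular Monge–Kantorovich metric mkD_Ω metrizes the A-weak topology on the ball {ω ∈ M : D_M(ω) ≤ r}, and therefore it metrizes the ‖·‖_M-topology on this ball. -/

import Mathlib

open scoped ComplexOrder

noncomputable section

/-! ### Admissible functions -/

/-- A function `F : [0,∞)⁴ → [0,∞)` is admissible when it is nondecreasing in each argument
and dominates `x₁x₃ + x₂x₄`. -/
def Admissible (F : ℝ → ℝ → ℝ → ℝ → ℝ) : Prop :=
  (∀ x₁ x₂ x₃ x₄ y₁ y₂ y₃ y₄ : ℝ, 0 ≤ x₁ → 0 ≤ x₂ → 0 ≤ x₃ → 0 ≤ x₄ →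
      x₁ ≤ y₁ → x₂ ≤ y₂ → x₃ ≤ y₃ → x₄ ≤ y₄ → F x₁ x₂ x₃ x₄ ≤ F y₁ y₂ y₃ y₄) ∧
  (∀ x₁ x₂ x₃ x₄ : ℝ, 0 ≤ x₁ → 0 ≤ x₂ → 0 ≤ x₃ → 0 ≤ x₄ →
      x₁ * x₃ + x₂ * x₄ ≤ F x₁ x₂ x₃ x₄)

/-- An admissible triple `(F,G,H)`. -/
def AdmissibleTriple (F : ℝ → ℝ → ℝ → ℝ → ℝ) (G : ℝ → ℝ → ℝ → ℝ) (H : ℝ → ℝ → ℝ) : Prop :=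
  Admissible F ∧
  (∀ x y z x' y' z' : ℝ, 0 ≤ x → 0 ≤ y → 0 ≤ z → x ≤ x' → y ≤ y' → z ≤ z' →
      G x y z ≤ G x' y' z') ∧
  (∀ x y z : ℝ, 0 ≤ x → 0 ≤ y → 0 ≤ z → (x + y) * z ≤ G x y z) ∧
  (∀ x y x' y' : ℝ, 0 ≤ x → 0 ≤ y → x ≤ x' → y ≤ y' → H x y ≤ H x' y') ∧
  (∀ x y : ℝ, 0 ≤ x → 0 ≤ y → 2 * x * y ≤ H x y)

section ReIm

variable {A : Type*} [NormedRing A] [StarRing A] [NormedAlgebra ℂ A]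

/-- The real part `(a + a*)/2` of an element of a complex `*`-algebra. -/
def reEl (a : A) : A := (2⁻¹ : ℂ) • (a + star a)

/-- The imaginary part `(a - a*)/(2i)` of an element of a complex `*`-algebra. -/
def imEl (a : A) : A := ((2 * Complex.I)⁻¹ : ℂ) • (a - star a)

end ReIm

/-! ### States -/

/-- A state on a unital complex `*`-algebra: a linear functional which is unital
and positive. -/
structure CState (A : Type*) [NormedRing A] [StarRing A] [NormedAlgebra ℂ A] where
  toFun : A →ₗ[ℂ] ℂ
  map_one : toFun 1 = 1
  positive : ∀ a : A, 0 ≤ toFun (star a * a)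

/-- The topology induced by a distance function, generated by its open balls. -/
def ballTopology {X : Type*} (d : X → X → ℝ) : TopologicalSpace X :=
  TopologicalSpace.generateFrom {s | ∃ (x : X) (ε : ℝ), 0 < ε ∧ s = {y | d x y < ε}}

/-- The Hausdorff distance between two sets, relative to a distance function. -/
def hausDist {X : Type*} (d : X → X → ℝ) (S T : Set X) : ℝ :=
  max (sSup {r | ∃ x ∈ S, r = sInf {s | ∃ y ∈ T, s = d x y}})
      (sSup {r | ∃ y ∈ T, r = sInf {s | ∃ x ∈ S, s = d x y}})

/-- The diameter of a set relative to a distance function. -/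
def setDiam {X : Type*} (d : X → X → ℝ) (S : Set X) : ℝ :=
  sSup {r | ∃ x ∈ S, ∃ y ∈ S, r = d x y}

/-- The weak-* topology on the state space. -/
def stateWeakTopology (A : Type*) [NormedRing A] [StarRing A] [NormedAlgebra ℂ A] :
    TopologicalSpace (CState A) :=
  TopologicalSpace.induced (fun (φ : CState A) (a : A) => φ.toFun a) Pi.topologicalSpace

/-- The Monge-Kantorovich metric associated with a Lipschitz seminorm `L` with domain `dom`. -/
def mkDist {A : Type*} [NormedRing A] [StarRing A] [NormedAlgebra ℂ A]
    (dom : Set A) (L : A → ℝ) (φ ψ : CState A) : ℝ :=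
  sSup {r | ∃ a ∈ dom, L a ≤ 1 ∧ r = ‖φ.toFun a - ψ.toFun a‖}

/-- The 1-level set of a pivot is nonempty. -/
def pivotLevelNonempty {D : Type*} [NormedRing D] [StarRing D] [NormedAlgebra ℂ D]
    (x : D) : Prop :=
  ∃ φ : CState D,
    φ.toFun (star (1 - x) * (1 - x)) = 0 ∧ φ.toFun ((1 - x) * star (1 - x)) = 0

/-! ### Quasi-Leibniz quantum compact metric spaces -/

/-- An `F`-quasi-Leibniz quantum compact metric space structure on a unital C*-algebra `A`:
a Lipschitz seminorm `L` defined on a dense Jordan-Lie subalgebra `dom` of the self-adjoint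
part of `A`, vanishing exactly on `ℝ1`, lower semicontinuous, whose Monge-Kantorovich metric
metrizes the weak-* topology on the state space, and satisfying the `F`-quasi-Leibniz
inequality. -/
structure QLSpace (A : Type*) [NormedRing A] [StarRing A] [CStarRing A]
    [NormedAlgebra ℂ A] [StarModule ℂ A] [CompleteSpace A]
    (F : ℝ → ℝ → ℝ → ℝ → ℝ) where
  dom : Set A
  L : A → ℝ
  dom_selfAdjoint : ∀ a ∈ dom, IsSelfAdjoint a
  dom_dense : closure dom = {a : A | IsSelfAdjoint a}
  dom_add : ∀ a ∈ dom, ∀ b ∈ dom, a + b ∈ dom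
  dom_smul : ∀ (t : ℝ), ∀ a ∈ dom, (t : ℂ) • a ∈ dom
  dom_jordan : ∀ a ∈ dom, ∀ b ∈ dom, (2⁻¹ : ℂ) • (a * b + b * a) ∈ dom
  dom_lie : ∀ a ∈ dom, ∀ b ∈ dom, ((2 * Complex.I)⁻¹ : ℂ) • (a * b - b * a) ∈ dom
  one_mem : (1 : A) ∈ dom
  L_nonneg : ∀ a : A, 0 ≤ L a
  L_add : ∀ a ∈ dom, ∀ b ∈ dom, L (a + b) ≤ L a + L b
  L_smul : ∀ (t : ℝ), ∀ a ∈ dom, L ((t : ℂ) • a) = |t| * L a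
  L_eq_zero_iff : ∀ a ∈ dom, (L a = 0 ↔ ∃ t : ℝ, a = (t : ℂ) • (1 : A))
  lowerSemicontinuous : IsClosed {a : A | a ∈ dom ∧ L a ≤ 1}
  leibniz_jordan : ∀ a ∈ dom, ∀ b ∈ dom,
      L ((2⁻¹ : ℂ) • (a * b + b * a)) ≤ F ‖a‖ ‖b‖ (L a) (L b)
  leibniz_lie : ∀ a ∈ dom, ∀ b ∈ dom,
      L (((2 * Complex.I)⁻¹ : ℂ) • (a * b - b * a)) ≤ F ‖a‖ ‖b‖ (L a) (L b)
  mk_metrizes : ballTopology (mkDist dom L) = stateWeakTopology A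
/-! ### Metrized quantum vector bundles -/

/-- An `(F,G,H)`-metrized quantum vector bundle: a left Hilbert module `M` over a unital
C*-algebra `A` equipped with an `F`-quasi-Leibniz quantum compact metric space structure,
together with a D-norm `D` defined on a dense subspace `Ddom` of `M`, dominating the
C*-Hilbert norm, with compact unit ball, and satisfying the inner and modular quasi-Leibniz
inequalities with respect to `G` and `H`. -/
structure BundledMQVB (F : ℝ → ℝ → ℝ → ℝ → ℝ) (G : ℝ → ℝ → ℝ → ℝ) (H : ℝ → ℝ → ℝ) where
  A : Type
  [instRing : NormedRing A]
  [instStarRing : StarRing A]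
  [instCStar : CStarRing A]
  [instAlg : NormedAlgebra ℂ A]
  [instStarMod : StarModule ℂ A]
  [instComplete : CompleteSpace A]
  M : Type
  [instM : NormedAddCommGroup M]
  [instMC : Module ℂ M]
  [instMA : Module A M]
  [instTower : IsScalarTower ℂ A M]
  [instMComplete : CompleteSpace M]
  base : QLSpace A F
  inn : M → M → A
  Ddom : Set M
  D : M → ℝ
  inn_add_left : ∀ x y z : M, inn (x + y) z = inn x z + inn y z
  inn_smul_left : ∀ (a : A) (x y : M), inn (a • x) y = a * inn x y
  inn_smul_leftC : ∀ (c : ℂ) (x y : M), inn (c • x) y = c • inn x y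
  inn_star : ∀ x y : M, star (inn x y) = inn y x
  inn_pos : ∀ x : M, ∃ b : A, inn x x = star b * b
  inn_definite : ∀ x : M, inn x x = 0 → x = 0
  norm_eq : ∀ x : M, ‖x‖ = Real.sqrt ‖inn x x‖
  Ddom_dense : Dense Ddom
  Ddom_add : ∀ x ∈ Ddom, ∀ y ∈ Ddom, x + y ∈ Ddom
  Ddom_smul : ∀ (c : ℂ), ∀ x ∈ Ddom, c • x ∈ Ddom
  D_nonneg : ∀ x : M, 0 ≤ D x
  D_add : ∀ x ∈ Ddom, ∀ y ∈ Ddom, D (x + y) ≤ D x + D y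
  D_smul : ∀ (c : ℂ), ∀ x ∈ Ddom, D (c • x) = ‖c‖ * D x
  norm_le_D : ∀ x ∈ Ddom, ‖x‖ ≤ D x
  D_ball_compact : IsCompact {x : M | x ∈ Ddom ∧ D x ≤ 1}
  D_leibniz : ∀ a ∈ base.dom, ∀ x ∈ Ddom,
      a • x ∈ Ddom ∧ D (a • x) ≤ G ‖a‖ (base.L a) (D x)
  inn_leibniz : ∀ x ∈ Ddom, ∀ y ∈ Ddom,
      reEl (inn x y) ∈ base.dom ∧ imEl (inn x y) ∈ base.dom ∧
      base.L (reEl (inn x y)) ≤ H (D x) (D y) ∧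
      base.L (imEl (inn x y)) ≤ H (D x) (D y)

attribute [instance] BundledMQVB.instRing BundledMQVB.instStarRing BundledMQVB.instCStar
  BundledMQVB.instAlg BundledMQVB.instStarMod BundledMQVB.instComplete
  BundledMQVB.instM BundledMQVB.instMC BundledMQVB.instMA BundledMQVB.instTower
  BundledMQVB.instMComplete

variable {F : ℝ → ℝ → ℝ → ℝ → ℝ} {G : ℝ → ℝ → ℝ → ℝ} {H : ℝ → ℝ → ℝ}

/-- The closed ball of radius `r` for the D-norm of a metrized quantum vector bundle. -/
def BundledMQVB.Dball (Ω : BundledMQVB F G H) (r : ℝ) : Set Ω.M :=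
  {ω | ω ∈ Ω.Ddom ∧ Ω.D ω ≤ r}

/-- The modular Monge-Kantorovich metric of a metrized quantum vector bundle. -/
def BundledMQVB.mkD (Ω : BundledMQVB F G H) (x y : Ω.M) : ℝ :=
  sSup {r | ∃ ξ ∈ Ω.Ddom, Ω.D ξ ≤ 1 ∧ r = ‖Ω.inn x ξ - Ω.inn y ξ‖}

/-- The `A`-weak topology on the module of a metrized quantum vector bundle. -/
def BundledMQVB.aWeak (Ω : BundledMQVB F G H) : TopologicalSpace Ω.M :=
  TopologicalSpace.induced (fun (ω : Ω.M) (ξ : Ω.M) => Ω.inn ω ξ) Pi.topologicalSpace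
/-! ### Modular bridges -/

/-- A modular bridge between two metrized quantum vector bundles. -/
structure ModularBridge (ΩA ΩB : BundledMQVB F G H) where
  Dalg : Type
  [instDRing : NormedRing Dalg]
  [instDStarRing : StarRing Dalg]
  [instDCStar : CStarRing Dalg]
  [instDAlg : NormedAlgebra ℂ Dalg]
  [instDStarMod : StarModule ℂ Dalg]
  [instDComplete : CompleteSpace Dalg]
  J : Type
  [instJ : Nonempty J]
  pivot : Dalg
  piA : ΩA.A →⋆ₐ[ℂ] Dalg
  piB : ΩB.A →⋆ₐ[ℂ] Dalg
  piA_inj : Function.Injective piA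
  piB_inj : Function.Injective piB
  pivot_norm : ‖pivot‖ = 1
  levelSet_nonempty : pivotLevelNonempty pivot
  anchors : J → ΩA.M
  coanchors : J → ΩB.M
  anchors_mem : ∀ j, anchors j ∈ ΩA.Ddom
  anchors_le : ∀ j, ΩA.D (anchors j) ≤ 1
  coanchors_mem : ∀ j, coanchors j ∈ ΩB.Ddom
  coanchors_le : ∀ j, ΩB.D (coanchors j) ≤ 1

attribute [instance] ModularBridge.instDRing ModularBridge.instDStarRing
  ModularBridge.instDCStar ModularBridge.instDAlg ModularBridge.instDStarMod
  ModularBridge.instDComplete ModularBridge.instJ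

namespace ModularBridge

variable {ΩA ΩB : BundledMQVB F G H}

/-- The bridge seminorm of a modular bridge. -/
def bn (γ : ModularBridge ΩA ΩB) (a : ΩA.A) (b : ΩB.A) : ℝ :=
  ‖γ.piA a * γ.pivot - γ.pivot * γ.piB b‖

/-- The deck seminorm of a modular bridge. -/
def dn (γ : ModularBridge ΩA ΩB) (ω : ΩA.M) (η : ΩB.M) : ℝ :=
  ⨆ k : γ.J,
    max (γ.bn (ΩA.inn ω (γ.anchors k)) (ΩB.inn η (γ.coanchors k)))
        (γ.bn (ΩA.inn (γ.anchors k) ω) (ΩB.inn (γ.coanchors k) η))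

/-- The basic reach of a modular bridge. -/
def basicReach (γ : ModularBridge ΩA ΩB) : ℝ :=
  max
    (sSup {r | ∃ a ∈ ΩA.base.dom, ΩA.base.L a ≤ 1 ∧
        r = sInf {s | ∃ b ∈ ΩB.base.dom, ΩB.base.L b ≤ 1 ∧ s = γ.bn a b}})
    (sSup {r | ∃ b ∈ ΩB.base.dom, ΩB.base.L b ≤ 1 ∧
        r = sInf {s | ∃ a ∈ ΩA.base.dom, ΩA.base.L a ≤ 1 ∧ s = γ.bn a b}})

/-- The modular reach of a modular bridge. -/
def modularReach (γ : ModularBridge ΩA ΩB) : ℝ :=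
  ⨆ j : γ.J, γ.dn (γ.anchors j) (γ.coanchors j)

/-- The imprint of a modular bridge. -/
def imprint (γ : ModularBridge ΩA ΩB) : ℝ :=
  max (hausDist ΩA.mkD (Set.range γ.anchors) (ΩA.Dball 1))
      (hausDist ΩB.mkD (Set.range γ.coanchors) (ΩB.Dball 1))

/-- The reach of a modular bridge. -/
def reach (γ : ModularBridge ΩA ΩB) : ℝ :=
  max γ.basicReach (γ.modularReach + γ.imprint)

/-- The states of the bridge algebra in the 1-level set of the pivot. -/
def levelStates (γ : ModularBridge ΩA ΩB) : Set (CState γ.Dalg) :=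
  {φ | φ.toFun (star (1 - γ.pivot) * (1 - γ.pivot)) = 0 ∧
       φ.toFun ((1 - γ.pivot) * star (1 - γ.pivot)) = 0}

/-- The height of a modular bridge. -/
def height (γ : ModularBridge ΩA ΩB) : ℝ :=
  max
    (hausDist (mkDist ΩA.base.dom ΩA.base.L) (Set.univ : Set (CState ΩA.A))
      {ψ | ∃ φ ∈ γ.levelStates, ∀ a : ΩA.A, ψ.toFun a = φ.toFun (γ.piA a)})
    (hausDist (mkDist ΩB.base.dom ΩB.base.L) (Set.univ : Set (CState ΩB.A))
      {ψ | ∃ φ ∈ γ.levelStates, ∀ b : ΩB.A, ψ.toFun b = φ.toFun (γ.piB b)})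

/-- The length of a modular bridge. -/
def length (γ : ModularBridge ΩA ΩB) : ℝ := max γ.reach γ.height

/-- The `l`-modular target set of `ω` for a modular bridge. -/
def mtarget (γ : ModularBridge ΩA ΩB) (ω : ΩA.M) (l : ℝ) : Set ΩB.M :=
  {η | η ∈ ΩB.Ddom ∧ ΩB.D η ≤ l ∧ γ.dn ω η ≤ l * γ.reach}

/-- The `l`-target set of `a` for a modular bridge. -/
def atarget (γ : ModularBridge ΩA ΩB) (a : ΩA.A) (l : ℝ) : Set ΩB.A :=
  {b | b ∈ ΩB.base.dom ∧ ΩB.base.L b ≤ l ∧ γ.bn a b ≤ l * γ.basicReach}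

/-- The reverse of a modular bridge. -/
def reverse (γ : ModularBridge ΩA ΩB) : ModularBridge ΩB ΩA where
  Dalg := γ.Dalg
  J := γ.J
  pivot := star γ.pivot
  piA := γ.piB
  piB := γ.piA
  piA_inj := γ.piB_inj
  piB_inj := γ.piA_inj
  pivot_norm := by rw [norm_star]; exact γ.pivot_norm
  levelSet_nonempty := by
    obtain ⟨φ, h1, h2⟩ := γ.levelSet_nonempty
    refine ⟨φ, ?_, ?_⟩
    · have e1 : star ((1 : γ.Dalg) - star γ.pivot) = 1 - γ.pivot := by
        simp [star_sub]
      have e2 : (1 : γ.Dalg) - star γ.pivot = star (1 - γ.pivot) := by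
        simp [star_sub]
      rw [e1, e2]; exact h2
    · have e1 : star ((1 : γ.Dalg) - star γ.pivot) = 1 - γ.pivot := by
        simp [star_sub]
      have e2 : (1 : γ.Dalg) - star γ.pivot = star (1 - γ.pivot) := by
        simp [star_sub]
      rw [e1, e2]; exact h1
  anchors := γ.coanchors
  coanchors := γ.anchors
  anchors_mem := γ.coanchors_mem
  anchors_le := γ.coanchors_le
  coanchors_mem := γ.anchors_mem
  coanchors_le := γ.anchors_le

end ModularBridge

/-! ### Modular treks -/

/-- A modular trek: a finite chain of composable modular bridges. -/
inductive Trek (F : ℝ → ℝ → ℝ → ℝ → ℝ) (G : ℝ → ℝ → ℝ → ℝ) (H : ℝ → ℝ → ℝ) :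
    BundledMQVB F G H → BundledMQVB F G H → Type 1
  | single {ΩA ΩB : BundledMQVB F G H} (γ : ModularBridge ΩA ΩB) : Trek F G H ΩA ΩB
  | cons {ΩA ΩB ΩC : BundledMQVB F G H} (γ : ModularBridge ΩA ΩB)
      (Γ : Trek F G H ΩB ΩC) : Trek F G H ΩA ΩC

namespace Trek

/-- The length of a modular trek: the sum of the lengths of its bridges. -/
def length : ∀ {ΩA ΩB : BundledMQVB F G H}, Trek F G H ΩA ΩB → ℝ
  | _, _, .single γ => γ.length
  | _, _, .cons γ Γ => γ.length + Trek.length Γ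

/-- The modular target set of a modular trek (the set of endpoints of `l`-itineraries). -/
def mtarget : ∀ {ΩA ΩB : BundledMQVB F G H}, Trek F G H ΩA ΩB → ΩA.M → ℝ → Set ΩB.M
  | _, _, .single γ, ω, l => γ.mtarget ω l
  | _, _, .cons γ Γ, ω, l => {η | ∃ ξ ∈ γ.mtarget ω l, η ∈ Trek.mtarget Γ ξ l}

/-- The target set of a modular trek on the base algebras. -/
def atarget : ∀ {ΩA ΩB : BundledMQVB F G H}, Trek F G H ΩA ΩB → ΩA.A → ℝ → Set ΩB.A
  | _, _, .single γ, a, l => γ.atarget a l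
  | _, _, .cons γ Γ, a, l => {b | ∃ c ∈ γ.atarget a l, b ∈ Trek.atarget Γ c l}

end Trek


/-! The modular Monge–Kantorovich metric is squeezed between two powers of the norm on a
D-ball: Cauchy–Schwarz gives `mkD ω ω' ≤ ‖ω - ω'‖`, and testing against the normalised
difference `ξ = (ω - ω') / D(ω - ω')` gives `‖ω - ω'‖² ≤ D(ω - ω') · mkD ω ω' ≤ 2r · mkD ω ω'`.
So `mkD` metrizes the norm topology on the ball `D ≤ r`. That ball is norm compact and the
`A`-weak topology is Hausdorff and coarser than the norm topology, so the two agree there. -/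

section BallTopology

variable {X Y : Type*} [PseudoMetricSpace Y] {f : X → Y} {d : X → X → ℝ}

theorem ballTopology_le_induced (d_self : ∀ x, d x x = 0)
    (dist_lt_of_lt : ∀ ε > 0, ∃ δ > 0, ∀ x y, d x y < δ → dist (f x) (f y) < ε) :
    ballTopology d ≤ TopologicalSpace.induced f inferInstance := by
  let _ : TopologicalSpace X := ballTopology d
  rintro _ ⟨V, hV, rfl⟩
  refine isOpen_iff_forall_mem_open.mpr fun x hx => ?_
  obtain ⟨ε, hε, hball⟩ := Metric.isOpen_iff.mp hV (f x) hx
  obtain ⟨δ, hδ, hd⟩ := dist_lt_of_lt ε hε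
  refine ⟨{y | d x y < δ}, fun y hy => hball ?_,
    TopologicalSpace.GenerateOpen.basic _ ⟨x, δ, hδ, rfl⟩, by simpa [d_self] using hδ⟩
  rw [Metric.mem_ball, dist_comm]
  exact hd x y hy

theorem induced_le_ballTopology (d_triangle : ∀ x y z, d x z ≤ d x y + d y z)
    (d_le_dist : ∀ x y, d x y ≤ dist (f x) (f y)) :
    TopologicalSpace.induced f inferInstance ≤ ballTopology d := by
  refine le_generateFrom ?_
  rintro _ ⟨x, ε, -, rfl⟩
  let _ : TopologicalSpace X := TopologicalSpace.induced f inferInstance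
  refine isOpen_iff_mem_nhds.mpr fun y (hy : d x y < ε) => ?_
  rw [nhds_induced]
  refine Filter.mem_comap.mpr ⟨Metric.ball (f y) (ε - d x y), Metric.ball_mem_nhds _ (by linarith),
    fun z hz => ?_⟩
  have hyz : d y z < ε - d x y :=
    (d_le_dist y z).trans_lt (by rw [dist_comm]; exact Metric.mem_ball.mp hz)
  show d x z < ε
  linarith [d_triangle x y z]

end BallTopology

namespace BundledMQVB

variable (Ω : BundledMQVB F G H)

instance instCStarAlgebra : CStarAlgebra Ω.A :=
  { (inferInstance : NormedRing Ω.A), (inferInstance : StarRing Ω.A),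
    (inferInstance : CStarRing Ω.A), (inferInstance : NormedAlgebra ℂ Ω.A),
    (inferInstance : StarModule ℂ Ω.A), (inferInstance : CompleteSpace Ω.A) with }

lemma inn_zero_left (x : Ω.M) : Ω.inn 0 x = 0 := by
  simpa using Ω.inn_smul_leftC 0 0 x

lemma inn_sub_left (x y z : Ω.M) : Ω.inn (x - y) z = Ω.inn x z - Ω.inn y z := by
  rw [sub_eq_add_neg, Ω.inn_add_left, ← neg_one_smul ℂ y, Ω.inn_smul_leftC, neg_one_smul,
    ← sub_eq_add_neg]

lemma inn_sub_right (x y z : Ω.M) : Ω.inn x (y - z) = Ω.inn x y - Ω.inn x z := by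
  rw [← Ω.inn_star, inn_sub_left, star_sub, Ω.inn_star, Ω.inn_star]

lemma inn_smul_right (c : ℂ) (x y : Ω.M) : Ω.inn x (c • y) = star c • Ω.inn x y := by
  rw [← Ω.inn_star, Ω.inn_smul_leftC, star_smul, Ω.inn_star]

lemma inn_ofReal_smul_right (t : ℝ) (x y : Ω.M) :
    Ω.inn x ((t : ℂ) • y) = (t : ℂ) • Ω.inn x y := by
  rw [inn_smul_right, Complex.star_def, Complex.conj_ofReal]

lemma inn_smul_right_algebra (a : Ω.A) (x y : Ω.M) : Ω.inn x (a • y) = Ω.inn x y * star a := by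
  rw [← Ω.inn_star, Ω.inn_smul_left, star_mul, Ω.inn_star]

lemma isSelfAdjoint_inn_self (x : Ω.M) : IsSelfAdjoint (Ω.inn x x) := Ω.inn_star x x

lemma norm_inn_self (x : Ω.M) : ‖Ω.inn x x‖ = ‖x‖ ^ 2 := by
  rw [Ω.norm_eq x, Real.sq_sqrt (norm_nonneg _)]

lemma inn_smul_sub_smul_self (a : Ω.A) (t : ℝ) (x y : Ω.M) :
    Ω.inn (a • x - (t : ℂ) • y) (a • x - (t : ℂ) • y)
      = a * Ω.inn x x * star a - t • (a * Ω.inn x y) - t • (Ω.inn y x * star a)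
        + t • t • Ω.inn y y := by
  simp only [inn_sub_left, inn_sub_right, Ω.inn_smul_left, Ω.inn_smul_leftC,
    inn_ofReal_smul_right, inn_smul_right_algebra]
  simp only [Complex.coe_smul, sub_mul, smul_sub, smul_mul_assoc, mul_assoc]
  abel

section SpectralOrder

attribute [local instance] CStarAlgebra.spectralOrder CStarAlgebra.spectralOrderedRing

lemma inn_self_nonneg (x : Ω.M) : 0 ≤ Ω.inn x x := by
  obtain ⟨b, hb⟩ := Ω.inn_pos x
  exact hb ▸ star_mul_self_nonneg b

/-- Cauchy–Schwarz, from positivity of `⟪a x - ‖x‖² y, a x - ‖x‖² y⟫` with `a = ⟪y, x⟫`. -/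
lemma norm_inn_le (x y : Ω.M) : ‖Ω.inn x y‖ ≤ ‖x‖ * ‖y‖ := by
  rcases eq_or_ne x 0 with rfl | hx
  · simp [inn_zero_left]
  set t := ‖x‖ ^ 2
  set a := Ω.inn y x
  have ht : 0 < t := by have := norm_pos_iff.mpr hx; positivity
  have hstar : Ω.inn x y = star a := (Ω.inn_star y x).symm
  have hexpand := Ω.inn_self_nonneg (a • x - (t : ℂ) • y)
  rw [inn_smul_sub_smul_self, hstar] at hexpand
  have hconj : a * Ω.inn x x * star a ≤ t • (a * star a) := by
    simpa [norm_inn_self] using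
      CStarAlgebra.star_right_conjugate_le_norm_smul (a := a) (Ω.isSelfAdjoint_inn_self x)
  have hle : t • (a * star a) ≤ t • t • Ω.inn y y := by
    have := add_nonneg hexpand (sub_nonneg.mpr hconj)
    rw [show a * Ω.inn x x * star a - t • (a * star a) - t • (a * star a) + t • t • Ω.inn y y
        + (t • (a * star a) - a * Ω.inn x x * star a)
        = t • t • Ω.inn y y - t • (a * star a) by abel] at this
    exact sub_nonneg.mp this
  have hnorm := CStarAlgebra.norm_le_norm_of_nonneg_of_le
    (smul_nonneg ht.le (mul_star_self_nonneg a)) hle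
  rw [norm_smul, norm_smul, norm_smul, CStarRing.norm_self_mul_star, norm_inn_self,
    Real.norm_of_nonneg ht.le] at hnorm
  have hsq : ‖Ω.inn x y‖ ^ 2 ≤ (‖x‖ * ‖y‖) ^ 2 := by
    rw [hstar, norm_star, mul_pow]
    nlinarith
  exact (pow_le_pow_iff_left₀ (norm_nonneg _) (by positivity) two_ne_zero).mp hsq

end SpectralOrder

lemma norm_complex_smul (c : ℂ) (x : Ω.M) : ‖c • x‖ = ‖c‖ * ‖x‖ := by
  rw [Ω.norm_eq, Ω.norm_eq x, Ω.inn_smul_leftC, inn_smul_right, smul_smul, norm_smul, norm_mul,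
    norm_star, Real.sqrt_mul (by positivity), Real.sqrt_mul_self (norm_nonneg c)]

lemma continuous_inn_left (ξ : Ω.M) : Continuous fun ω => Ω.inn ω ξ :=
  AddMonoidHomClass.continuous_of_bound
    (AddMonoidHom.mk' (fun ω => Ω.inn ω ξ) fun ω ω' => Ω.inn_add_left ω ω' ξ) ‖ξ‖
    fun ω => (Ω.norm_inn_le ω ξ).trans_eq (mul_comm _ _)

lemma inn_left_injective : Function.Injective fun (ω ξ : Ω.M) => Ω.inn ω ξ := by
  intro ω ω' h
  refine sub_eq_zero.mp (Ω.inn_definite _ ?_)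
  rw [inn_sub_left]
  exact sub_eq_zero.mpr (congrFun h _)

lemma induced_norm_eq_induced_aWeak {s : Set Ω.M} (hs : IsCompact s) :
    TopologicalSpace.induced (Subtype.val : s → Ω.M) inferInstance
      = TopologicalSpace.induced Subtype.val Ω.aWeak := by
  have : CompactSpace s := isCompact_iff_compactSpace.mp hs
  have hemb : Topology.IsClosedEmbedding fun (ω : s) (ξ : Ω.M) => Ω.inn ω ξ :=
    (continuous_pi fun ξ => (Ω.continuous_inn_left ξ).comp continuous_subtype_val).isClosedEmbedding
      (Ω.inn_left_injective.comp Subtype.val_injective)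
  rw [aWeak, induced_compose]
  exact hemb.eq_induced

lemma zero_mem_Ddom : (0 : Ω.M) ∈ Ω.Ddom := by
  obtain ⟨ω, hω⟩ := Ω.Ddom_dense.nonempty (h := ⟨0⟩)
  simpa using Ω.Ddom_smul 0 ω hω

lemma D_zero : Ω.D 0 = 0 := by
  obtain ⟨ω, hω⟩ := Ω.Ddom_dense.nonempty (h := ⟨0⟩)
  simpa using Ω.D_smul 0 ω hω

lemma isCompact_Dball {r : ℝ} (hr : 0 < r) : IsCompact (Ω.Dball r) := by
  have hscale : Ω.Dball r = (fun ω => (r : ℂ) • ω) '' Ω.Dball 1 := by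
    ext ω
    constructor
    · rintro ⟨hω, hωr⟩
      refine ⟨((r⁻¹ : ℝ) : ℂ) • ω, ⟨Ω.Ddom_smul _ ω hω, ?_⟩, ?_⟩
      · rw [Ω.D_smul _ ω hω, Complex.norm_real, Real.norm_of_nonneg (inv_nonneg.mpr hr.le)]
        exact inv_mul_le_one_of_le₀ hωr hr.le
      · simp [smul_smul, hr.ne']
    · rintro ⟨ω, ⟨hω, hω1⟩, rfl⟩
      refine ⟨Ω.Ddom_smul _ ω hω, ?_⟩
      rw [Ω.D_smul _ ω hω, Complex.norm_real, Real.norm_of_nonneg hr.le]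
      exact mul_le_of_le_one_right hr.le hω1
  have hcont : Continuous fun ω : Ω.M => (r : ℂ) • ω :=
    AddMonoidHomClass.continuous_of_bound
      (AddMonoidHom.mk' (fun ω : Ω.M => (r : ℂ) • ω) fun ω ω' => smul_add _ ω ω') ‖(r : ℂ)‖
      fun ω => (Ω.norm_complex_smul _ ω).le
  exact hscale ▸ Ω.D_ball_compact.image hcont

lemma sub_mem_Ddom {x y : Ω.M} (hx : x ∈ Ω.Ddom) (hy : y ∈ Ω.Ddom) : x - y ∈ Ω.Ddom := by
  simpa [sub_eq_add_neg] using Ω.Ddom_add x hx _ (Ω.Ddom_smul (-1) y hy)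

lemma D_sub_le {x y : Ω.M} (hx : x ∈ Ω.Ddom) (hy : y ∈ Ω.Ddom) :
    Ω.D (x - y) ≤ Ω.D x + Ω.D y := by
  have := Ω.D_add x hx _ (Ω.Ddom_smul (-1) y hy)
  rwa [Ω.D_smul (-1) y hy, neg_one_smul, ← sub_eq_add_neg, norm_neg, norm_one, one_mul] at this

lemma norm_inn_sub_inn_le_norm_sub (x y : Ω.M) {ξ : Ω.M} (hξ : ξ ∈ Ω.Ddom) (hξ1 : Ω.D ξ ≤ 1) :
    ‖Ω.inn x ξ - Ω.inn y ξ‖ ≤ ‖x - y‖ := by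
  rw [← inn_sub_left]
  exact (Ω.norm_inn_le _ _).trans
    (mul_le_of_le_one_right (norm_nonneg _) ((Ω.norm_le_D ξ hξ).trans hξ1))

lemma norm_inn_sub_inn_le_mkD (x y : Ω.M) {ξ : Ω.M} (hξ : ξ ∈ Ω.Ddom) (hξ1 : Ω.D ξ ≤ 1) :
    ‖Ω.inn x ξ - Ω.inn y ξ‖ ≤ Ω.mkD x y := by
  refine le_csSup ⟨‖x - y‖, ?_⟩ ⟨ξ, hξ, hξ1, rfl⟩
  rintro _ ⟨ζ, hζ, hζ1, rfl⟩
  exact Ω.norm_inn_sub_inn_le_norm_sub x y hζ hζ1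

lemma mkD_le {x y : Ω.M} {c : ℝ}
    (h : ∀ ξ ∈ Ω.Ddom, Ω.D ξ ≤ 1 → ‖Ω.inn x ξ - Ω.inn y ξ‖ ≤ c) : Ω.mkD x y ≤ c :=
  csSup_le ⟨_, 0, Ω.zero_mem_Ddom, Ω.D_zero.trans_le zero_le_one, rfl⟩
    (by rintro _ ⟨ξ, hξ, hξ1, rfl⟩; exact h ξ hξ hξ1)

lemma mkD_le_norm_sub (x y : Ω.M) : Ω.mkD x y ≤ ‖x - y‖ :=
  Ω.mkD_le fun _ => Ω.norm_inn_sub_inn_le_norm_sub x y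

lemma mkD_nonneg (x y : Ω.M) : 0 ≤ Ω.mkD x y :=
  (norm_nonneg _).trans
    (Ω.norm_inn_sub_inn_le_mkD x y Ω.zero_mem_Ddom (Ω.D_zero.trans_le zero_le_one))

lemma mkD_self (x : Ω.M) : Ω.mkD x x = 0 :=
  le_antisymm (by simpa using Ω.mkD_le_norm_sub x x) (Ω.mkD_nonneg x x)

lemma mkD_triangle (x y z : Ω.M) : Ω.mkD x z ≤ Ω.mkD x y + Ω.mkD y z :=
  Ω.mkD_le fun _ hξ hξ1 => (norm_sub_le_norm_sub_add_norm_sub _ _ _).trans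
    (add_le_add (Ω.norm_inn_sub_inn_le_mkD x y hξ hξ1) (Ω.norm_inn_sub_inn_le_mkD y z hξ hξ1))

lemma sq_norm_sub_le_D_mul_mkD {x y : Ω.M} (hx : x ∈ Ω.Ddom) (hy : y ∈ Ω.Ddom) :
    ‖x - y‖ ^ 2 ≤ Ω.D (x - y) * Ω.mkD x y := by
  have hxy := Ω.sub_mem_Ddom hx hy
  rcases (Ω.D_nonneg (x - y)).eq_or_lt with h0 | hpos
  · have : ‖x - y‖ = 0 := le_antisymm (h0 ▸ Ω.norm_le_D _ hxy) (norm_nonneg _)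
    simp [this, ← h0]
  set c := (Ω.D (x - y))⁻¹
  have hc : ‖(c : ℂ)‖ = c := by rw [Complex.norm_real, Real.norm_of_nonneg (inv_nonneg.mpr hpos.le)]
  have htest := Ω.norm_inn_sub_inn_le_mkD x y (Ω.Ddom_smul (c : ℂ) _ hxy)
    (by rw [Ω.D_smul _ _ hxy, hc, inv_mul_cancel₀ hpos.ne'])
  rw [← inn_sub_left, inn_ofReal_smul_right, norm_smul, hc, norm_inn_self] at htest
  calc ‖x - y‖ ^ 2 = Ω.D (x - y) * (c * ‖x - y‖ ^ 2) := by
        rw [← mul_assoc, mul_inv_cancel₀ hpos.ne', one_mul]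
    _ ≤ Ω.D (x - y) * Ω.mkD x y := mul_le_mul_of_nonneg_left htest hpos.le

lemma norm_sub_lt_of_mkD_lt {r ε : ℝ} (hr : 0 < r) (hε : 0 < ε) :
    ∃ δ > 0, ∀ x ∈ Ω.Dball r, ∀ y ∈ Ω.Dball r, Ω.mkD x y < δ → ‖x - y‖ < ε := by
  refine ⟨ε ^ 2 / (2 * r), by positivity, fun x ⟨hx, hxr⟩ y ⟨hy, hyr⟩ hlt => ?_⟩
  have hD : Ω.D (x - y) ≤ 2 * r := (Ω.D_sub_le hx hy).trans (by linarith)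
  have hsq : ‖x - y‖ ^ 2 < ε ^ 2 :=
    calc ‖x - y‖ ^ 2 ≤ Ω.D (x - y) * Ω.mkD x y := Ω.sq_norm_sub_le_D_mul_mkD hx hy
      _ ≤ 2 * r * Ω.mkD x y := mul_le_mul_of_nonneg_right hD (Ω.mkD_nonneg x y)
      _ < 2 * r * (ε ^ 2 / (2 * r)) := by gcongr
      _ = ε ^ 2 := by field_simp
  exact lt_of_pow_lt_pow_left₀ 2 hε.le hsq

end BundledMQVB

theorem statement19_general {F : ℝ → ℝ → ℝ → ℝ → ℝ} {G : ℝ → ℝ → ℝ → ℝ} {H : ℝ → ℝ → ℝ}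
    (Ω : BundledMQVB F G H) (r : ℝ) (hr : 0 < r) :
    ballTopology (fun p q : {ω : Ω.M // ω ∈ Ω.Ddom ∧ Ω.D ω ≤ r} => Ω.mkD p.1 q.1)
      = TopologicalSpace.induced (Subtype.val : {ω : Ω.M // ω ∈ Ω.Ddom ∧ Ω.D ω ≤ r} → Ω.M)
          Ω.aWeak ∧
    ballTopology (fun p q : {ω : Ω.M // ω ∈ Ω.Ddom ∧ Ω.D ω ≤ r} => Ω.mkD p.1 q.1)
      = TopologicalSpace.induced (Subtype.val : {ω : Ω.M // ω ∈ Ω.Ddom ∧ Ω.D ω ≤ r} → Ω.M)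
          (inferInstance : TopologicalSpace Ω.M) := by
  have hnorm : ballTopology (fun p q : Ω.Dball r => Ω.mkD p.1 q.1)
      = TopologicalSpace.induced (Subtype.val : Ω.Dball r → Ω.M) inferInstance := by
    refine le_antisymm (ballTopology_le_induced (fun p => Ω.mkD_self p.1) fun ε hε => ?_)
      (induced_le_ballTopology (fun p q s => Ω.mkD_triangle p.1 q.1 s.1)
        fun p q => (Ω.mkD_le_norm_sub p.1 q.1).trans_eq (dist_eq_norm _ _).symm)
    obtain ⟨δ, hδ, hlt⟩ := Ω.norm_sub_lt_of_mkD_lt hr hε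
    exact ⟨δ, hδ, fun p q h => (dist_eq_norm _ _).trans_lt (hlt p.1 p.2 q.1 q.2 h)⟩
  exact ⟨hnorm.trans (Ω.induced_norm_eq_induced_aWeak (Ω.isCompact_Dball hr)), hnorm⟩

/-- for every `r > 0`, the modular Monge-Kantorovich metric of a metrized
quantum vector bundle metrizes the `A`-weak topology on the closed `r`-ball of the D-norm,
and therefore also metrizes the norm topology on this ball. -/
theorem statement19 {F : ℝ → ℝ → ℝ → ℝ → ℝ} {G : ℝ → ℝ → ℝ → ℝ} {H : ℝ → ℝ → ℝ}
    (hFGH : AdmissibleTriple F G H) (Ω : BundledMQVB F G H) (r : ℝ) (hr : 0 < r) :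
    ballTopology (fun p q : {ω : Ω.M // ω ∈ Ω.Ddom ∧ Ω.D ω ≤ r} => Ω.mkD p.1 q.1)
      = TopologicalSpace.induced (Subtype.val : {ω : Ω.M // ω ∈ Ω.Ddom ∧ Ω.D ω ≤ r} → Ω.M)
          Ω.aWeak ∧
    ballTopology (fun p q : {ω : Ω.M // ω ∈ Ω.Ddom ∧ Ω.D ω ≤ r} => Ω.mkD p.1 q.1)
      = TopologicalSpace.induced (Subtype.val : {ω : Ω.M // ω ∈ Ω.Ddom ∧ Ω.D ω ≤ r} → Ω.M)
          (inferInstance : TopologicalSpace Ω.M) :=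
  statement19_general Ω r hr
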